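/- arXiv:1804.05441 — 2 statements merged into one kernel-verified Lean document; each statement's English description precedes it below -/
import Mathlib

section
/- Let s ∈ V. Define d_0 : V → ℝ≥0∞ by d_0(s) = 0 and d_0(v) = ∞ for v ≠ s, and inductively d_{k+1}(v) = min( d_k(v), min_{u ∈ V} ( d_k(u) + w(u,v) ) ). Then for every k ∈ ℕ and every v ∈ V, d_k(v) = δ_k(s,v); that is, k rounds of Bellman–Ford relaxation compute exactly the k-hop shortest-path distances from s. -/
open scoped ENNReal BigOperators

/-- The weight of a walk, given as the list of vertices it visits (in order):
the sum of the edge weights of consecutive pairs. A single vertex has weight 0. -/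
noncomputable def walkWeight {V : Type*} (w : V → V → ℝ≥0∞) (p : List V) : ℝ≥0∞ :=
  (List.zipWith w p p.tail).sum

/-- `p` is a walk from `u` to `v`: a nonempty list of vertices starting at `u`
and ending at `v`. -/
def IsWalk {V : Type*} (u v : V) (p : List V) : Prop :=
  p.head? = some u ∧ p.getLast? = some v

/-- Shortest-path distance: infimum of walk weights over all walks from `u` to `v`
(`∞` if there is no walk). -/
noncomputable def delta {V : Type*} (w : V → V → ℝ≥0∞) (u v : V) : ℝ≥0∞ :=
  ⨅ p ∈ {p : List V | IsWalk u v p}, walkWeight w p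

/-- `h`-hop shortest-path distance: infimum of walk weights over all walks from `u`
to `v` with at most `h` edges (`∞` if there is no such walk). -/
noncomputable def deltaH {V : Type*} (w : V → V → ℝ≥0∞) (h : ℕ) (u v : V) : ℝ≥0∞ :=
  ⨅ p ∈ {p : List V | IsWalk u v p ∧ p.length ≤ h + 1}, walkWeight w p

section Walks

variable {V : Type*} (w : V → V → ℝ≥0∞)

@[simp]
lemma walkWeight_singleton (v : V) : walkWeight w [v] = 0 := by
  simp [walkWeight]

@[simp]
lemma walkWeight_cons_cons (a b : V) (l : List V) :
    walkWeight w (a :: b :: l) = w a b + walkWeight w (b :: l) := by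
  simp [walkWeight]

lemma walkWeight_append_singleton {q : List V} {u : V} (hq : q.getLast? = some u) (v : V) :
    walkWeight w (q ++ [v]) = walkWeight w q + w u v := by
  induction q with
  | nil => simp at hq
  | cons a q ih =>
    cases q with
    | nil => simp_all
    | cons b q =>
      rw [List.getLast?_cons_cons] at hq
      rw [List.cons_append, List.cons_append, walkWeight_cons_cons, ← List.cons_append, ih hq,
        walkWeight_cons_cons, add_assoc]

variable {w}

lemma IsWalk.append_singleton {s u : V} {q : List V} (hq : IsWalk s u q) (v : V) :
    IsWalk s v (q ++ [v]) := by
  simp [IsWalk, hq.1]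

lemma IsWalk.eq_append_singleton {s v : V} {p : List V} (hp : IsWalk s v p)
    (hlen : 2 ≤ p.length) : ∃ q u, p = q ++ [v] ∧ IsWalk s u q := by
  obtain rfl | ⟨q, b, rfl⟩ := p.eq_nil_or_concat
  · simp at hlen
  rw [List.concat_eq_append] at hp hlen ⊢
  have hq : q ≠ [] := by rintro rfl; simp at hlen
  obtain ⟨hs, hv⟩ := hp
  simp only [List.getLast?_concat, Option.some_inj] at hv
  subst hv
  refine ⟨q, q.getLast hq, rfl, ?_, List.getLast?_eq_some_getLast hq⟩
  rwa [List.head?_append_of_ne_nil _ hq] at hs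

end Walks

section HopDistance

variable {V : Type*} {w : V → V → ℝ≥0∞} {h : ℕ} {u v : V}

lemma deltaH_le_walkWeight {p : List V} (hp : IsWalk u v p) (hlen : p.length ≤ h + 1) :
    deltaH w h u v ≤ walkWeight w p :=
  iInf₂_le p ⟨hp, hlen⟩

lemma le_deltaH {c : ℝ≥0∞}
    (H : ∀ p : List V, IsWalk u v p → p.length ≤ h + 1 → c ≤ walkWeight w p) :
    c ≤ deltaH w h u v :=
  le_iInf₂ fun p hp => H p hp.1 hp.2

variable (w)

lemma deltaH_zero_self (s : V) : deltaH w 0 s s = 0 :=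
  nonpos_iff_eq_zero.1 <|
    (deltaH_le_walkWeight ⟨rfl, rfl⟩ le_rfl).trans_eq (walkWeight_singleton w s)

lemma deltaH_zero_of_ne {s v : V} (hv : v ≠ s) : deltaH w 0 s v = ⊤ := by
  refine top_le_iff.1 (le_deltaH fun p hp hlen => ?_)
  match p, hp, hlen with
  | [a], ⟨hs, hv'⟩, _ =>
    simp only [List.head?_cons, List.getLast?_singleton, Option.some_inj] at hs hv'
    exact absurd (hv'.symm.trans hs) hv

lemma deltaH_antitone (u v : V) : Antitone fun h => deltaH w h u v :=
  fun _ _ hle => le_deltaH fun _ hp hlen => deltaH_le_walkWeight hp (by omega)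

lemma deltaH_succ_le_add (k : ℕ) (s u v : V) :
    deltaH w (k + 1) s v ≤ deltaH w k s u + w u v := by
  conv_rhs => rw [deltaH, ENNReal.iInf_add]
  refine le_iInf fun p => ?_
  rw [ENNReal.iInf_add]
  refine le_iInf fun ⟨hp, hlen⟩ => ?_
  rw [← walkWeight_append_singleton w hp.2]
  exact deltaH_le_walkWeight (hp.append_singleton v) (by simpa using hlen)

lemma min_le_deltaH_succ (k : ℕ) (s v : V) :
    min (deltaH w k s v) (⨅ u, deltaH w k s u + w u v) ≤ deltaH w (k + 1) s v := by
  refine le_deltaH fun p hp hlen => ?_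
  by_cases hshort : p.length ≤ k + 1
  · exact (min_le_left _ _).trans (deltaH_le_walkWeight hp hshort)
  obtain ⟨q, u, rfl, hq⟩ := hp.eq_append_singleton (by omega)
  calc min (deltaH w k s v) (⨅ u, deltaH w k s u + w u v)
      ≤ deltaH w k s u + w u v := (min_le_right _ _).trans (iInf_le _ u)
    _ ≤ walkWeight w q + w u v := by
      gcongr
      exact deltaH_le_walkWeight hq (by simpa using hlen)
    _ = walkWeight w (q ++ [v]) := (walkWeight_append_singleton w hq.2 v).symm

/-- The Bellman equation for hop-bounded distances: a walk with at most `k + 1` edges either has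
at most `k` edges or is a walk with at most `k` edges followed by one last edge. -/
lemma deltaH_succ (k : ℕ) (s v : V) :
    deltaH w (k + 1) s v = min (deltaH w k s v) (⨅ u, deltaH w k s u + w u v) :=
  le_antisymm
    (le_min (deltaH_antitone w s v k.le_succ) (le_iInf fun u => deltaH_succ_le_add w k s u v))
    (min_le_deltaH_succ w k s v)

end HopDistance

theorem bellmanFord_computes_hop_distances_general
    {V : Type*}
    (w : V → V → ℝ≥0∞) (s : V) (d : ℕ → V → ℝ≥0∞)
    (h0s : d 0 s = 0)
    (h0 : ∀ v : V, v ≠ s → d 0 v = ⊤)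
    (hstep : ∀ (k : ℕ) (v : V),
      d (k + 1) v = min (d k v) (⨅ u : V, d k u + w u v)) :
    ∀ (k : ℕ) (v : V), d k v = deltaH w k s v := by
  intro k
  induction k with
  | zero =>
    intro v
    by_cases hv : v = s
    · rw [hv, h0s, deltaH_zero_self]
    · rw [h0 v hv, deltaH_zero_of_ne w hv]
  | succ k ih => simp only [hstep, deltaH_succ, ih, implies_true]

/-- `k` rounds of Bellman–Ford relaxation from source `s` compute
exactly the `k`-hop shortest-path distances: `d_k(v) = δ_k(s,v)` for all `k, v`. -/
theorem bellmanFord_computes_hop_distances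
    {V : Type*} [Fintype V] [Nonempty V]
    (w : V → V → ℝ≥0∞) (s : V) (d : ℕ → V → ℝ≥0∞)
    (h0s : d 0 s = 0)
    (h0 : ∀ v : V, v ≠ s → d 0 v = ⊤)
    (hstep : ∀ (k : ℕ) (v : V),
      d (k + 1) v = min (d k v) (⨅ u : V, d k u + w u v)) :
    ∀ (k : ℕ) (v : V), d k v = deltaH w k s v :=
  bellmanFord_computes_hop_distances_general w s d h0s h0 hstep
end

section
/- Assume w(u,v) ≠ 0 for all u, v ∈ V (all edge weights are positive). Let s ∈ V and let par : V → V be a function such that for every v ≠ s with δ(s,v) < ∞, δ(s, par(v)) + w(par(v), v) = δ(s,v). Then for every v ∈ V with δ(s,v) < ∞ there exists k ≤ n − 1 such that the k-fold iterate par^[k](v) = s, the vertices v, par(v), …, par^[k](v) are pairwise distinct, and the reversed sequence s = par^[k](v), …, par(v), v is a walk from s to v of weight δ(s,v). In other words, shortest-path parent pointers form an SSSP tree rooted at s whose tree paths realize the shortest-path distances. -/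
open scoped ENNReal BigOperators

/-!
Positive weights make `δ(s, ·)` strictly decrease along parent pointers, so the parent chain
from `v` cannot revisit a vertex before it reaches `s`; by pigeonhole it reaches `s` within
`n - 1` steps. Summing the parent equations along the chain telescopes to `δ(s, v)`.
-/

section Walks

variable {V : Type*} (w : V → V → ℝ≥0∞)

theorem delta_le_walkWeight {u v : V} {p : List V} (h : IsWalk u v p) :
    delta w u v ≤ walkWeight w p :=
  iInf₂_le p h

theorem delta_self (s : V) : delta w s s = 0 :=
  nonpos_iff_eq_zero.1 (delta_le_walkWeight w (p := [s]) ⟨rfl, rfl⟩)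

theorem walkWeight_cons (a : V) {b : V} {l : List V} (hl : l.head? = some b) :
    walkWeight w (a :: l) = w a b + walkWeight w l := by
  cases l with
  | nil => cases hl
  | cons c l =>
    obtain rfl : c = b := Option.some.inj hl
    simp [walkWeight]

theorem isWalk_reverse_iterate (f : V → V) (v : V) (k : ℕ) :
    IsWalk (f^[k] v) v (List.iterate f v (k + 1)).reverse := by
  constructor
  · rw [List.head?_reverse, List.getLast?_eq_getElem?, List.length_iterate,
      Nat.add_sub_cancel, List.getElem?_iterate _ _ _ _ k.lt_succ_self]
  · rw [List.getLast?_reverse]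
    rfl

end Walks

theorem succ_le_card_of_injOn_Iic {V : Type*} [Fintype V] {f : ℕ → V} {n : ℕ}
    (hf : Set.InjOn f (Set.Iic n)) : n + 1 ≤ Fintype.card V := by
  have := Finset.card_le_card_of_injOn f (s := Finset.Iic n) (t := Finset.univ)
    (fun _ _ => Finset.mem_coe.2 (Finset.mem_univ _)) (by rwa [Finset.coe_Iic])
  rwa [Nat.card_Iic, Finset.card_univ] at this

def IsShortestPathParent {V : Type*} (w : V → V → ℝ≥0∞) (s : V) (par : V → V) : Prop :=
  ∀ v : V, v ≠ s → delta w s v ≠ ⊤ → delta w s (par v) + w (par v) v = delta w s v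

namespace IsShortestPathParent

variable {V : Type*} {w : V → V → ℝ≥0∞} {s : V} {par : V → V}
  (hpar : IsShortestPathParent w s par) {v : V}
include hpar

theorem delta_parent_ne_top (hvs : v ≠ s) (hv : delta w s v ≠ ⊤) :
    delta w s (par v) ≠ ⊤ :=
  ne_top_of_le_ne_top hv (hpar v hvs hv ▸ le_self_add)

theorem delta_parent_lt (hw : ∀ u v : V, w u v ≠ 0) (hvs : v ≠ s) (hv : delta w s v ≠ ⊤) :
    delta w s (par v) < delta w s v :=
  hpar v hvs hv ▸ ENNReal.lt_add_right (hpar.delta_parent_ne_top hvs hv) (hw _ _)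

theorem delta_iterate_ne_top (hv : delta w s v ≠ ⊤) :
    ∀ {n : ℕ}, (∀ j < n, par^[j] v ≠ s) → delta w s (par^[n] v) ≠ ⊤
  | 0, _ => hv
  | n + 1, hn => by
    rw [Function.iterate_succ_apply']
    exact hpar.delta_parent_ne_top (hn n n.lt_succ_self)
      (delta_iterate_ne_top hv fun j hj => hn j (hj.trans n.lt_succ_self))

theorem strictAntiOn_delta_iterate (hw : ∀ u v : V, w u v ≠ 0) (hv : delta w s v ≠ ⊤)
    {n : ℕ} (hn : ∀ j < n, par^[j] v ≠ s) :
    StrictAntiOn (fun i => delta w s (par^[i] v)) (Set.Iic n) := by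
  refine strictAntiOn_Iic_of_succ_lt fun m hm => ?_
  rw [Nat.succ_eq_succ, Function.iterate_succ_apply']
  exact hpar.delta_parent_lt hw (hn m hm)
    (hpar.delta_iterate_ne_top hv fun j hj => hn j (hj.trans hm))

theorem injOn_iterate (hw : ∀ u v : V, w u v ≠ 0) (hv : delta w s v ≠ ⊤)
    {n : ℕ} (hn : ∀ j < n, par^[j] v ≠ s) :
    Set.InjOn (fun i => par^[i] v) (Set.Iic n) :=
  Set.InjOn.of_comp (g := delta w s) (hpar.strictAntiOn_delta_iterate hw hv hn).injOn

theorem exists_iterate_eq_root [Fintype V] (hw : ∀ u v : V, w u v ≠ 0)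
    (hv : delta w s v ≠ ⊤) : ∃ k, par^[k] v = s := by
  by_contra! hnever
  have := succ_le_card_of_injOn_Iic
    (hpar.injOn_iterate hw hv (n := Fintype.card V) fun j _ => hnever j)
  omega

theorem delta_add_walkWeight_reverse_iterate (hv : delta w s v ≠ ⊤) :
    ∀ {k : ℕ}, (∀ j < k, par^[j] v ≠ s) →
      delta w s (par^[k] v) + walkWeight w (List.iterate par v (k + 1)).reverse = delta w s v
  | 0, _ => by simp [walkWeight]
  | k + 1, hk => by
    have hk' : ∀ j < k, par^[j] v ≠ s := fun j hj => hk j (hj.trans k.lt_succ_self)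
    rw [List.iterate_add par v (k + 1) 1, List.reverse_append, List.iterate, List.iterate,
      List.reverse_singleton, List.singleton_append,
      walkWeight_cons w _ (isWalk_reverse_iterate par v k).1, Function.iterate_succ_apply']
    calc delta w s (par (par^[k] v)) + (w (par (par^[k] v)) (par^[k] v) + walkWeight w _)
        = delta w s (par^[k] v) + walkWeight w (List.iterate par v (k + 1)).reverse := by
          rw [← add_assoc, hpar _ (hk k k.lt_succ_self) (delta_iterate_ne_top hpar hv hk')]
      _ = delta w s v := delta_add_walkWeight_reverse_iterate hv hk'

end IsShortestPathParent

theorem parent_pointers_form_sssp_tree_general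
    {V : Type*} [Fintype V]
    (w : V → V → ℝ≥0∞) (hw : ∀ u v : V, w u v ≠ 0)
    (s : V) (par : V → V)
    (hpar : ∀ v : V, v ≠ s → delta w s v ≠ ⊤ →
      delta w s (par v) + w (par v) v = delta w s v) :
    ∀ v : V, delta w s v ≠ ⊤ →
      ∃ k : ℕ, k ≤ Fintype.card V - 1 ∧
        par^[k] v = s ∧
        (∀ i ≤ k, ∀ j ≤ k, par^[i] v = par^[j] v → i = j) ∧
        IsWalk s v ((List.iterate par v (k + 1)).reverse) ∧
        walkWeight w ((List.iterate par v (k + 1)).reverse) = delta w s v := by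
  intro v hv
  classical
  have hpar : IsShortestPathParent w s par := hpar
  have hreach := hpar.exists_iterate_eq_root hw hv
  set k := Nat.find hreach
  have hk : par^[k] v = s := Nat.find_spec hreach
  have hbefore : ∀ j < k, par^[j] v ≠ s := fun j hj => Nat.find_min hreach hj
  have hinj := hpar.injOn_iterate hw hv hbefore
  have hweight := hpar.delta_add_walkWeight_reverse_iterate hv hbefore
  rw [hk, delta_self, zero_add] at hweight
  refine ⟨k, Nat.le_sub_one_of_lt (succ_le_card_of_injOn_Iic hinj), hk,
    fun i hi j hj => hinj hi hj, hk ▸ isWalk_reverse_iterate par v k, hweight⟩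

/-- With positive edge weights, shortest-path parent pointers form an
SSSP tree rooted at `s`: for every `v` with `δ(s,v) < ∞`, iterating `par` from `v`
reaches `s` in some `k ≤ n − 1` steps through pairwise distinct vertices, and the
reversed sequence `s = par^[k](v), …, par(v), v` is a walk from `s` to `v` of
weight `δ(s,v)`. -/
theorem parent_pointers_form_sssp_tree
    {V : Type*} [Fintype V] [Nonempty V]
    (w : V → V → ℝ≥0∞) (hw : ∀ u v : V, w u v ≠ 0)
    (s : V) (par : V → V)
    (hpar : ∀ v : V, v ≠ s → delta w s v ≠ ⊤ →
      delta w s (par v) + w (par v) v = delta w s v) :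
    ∀ v : V, delta w s v ≠ ⊤ →
      ∃ k : ℕ, k ≤ Fintype.card V - 1 ∧
        par^[k] v = s ∧
        (∀ i ≤ k, ∀ j ≤ k, par^[i] v = par^[j] v → i = j) ∧
        IsWalk s v ((List.iterate par v (k + 1)).reverse) ∧
        walkWeight w ((List.iterate par v (k + 1)).reverse) = delta w s v :=
  parent_pointers_form_sssp_tree_general w hw s par hpar
end
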